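/- Transmutation property of the Abel transform on the hyperbolic plane: Let f ∈ C_c^∞(H²) be radial, and let Δ be the hyperbolic Laplacian, Δf = y²(∂²f/∂x² + ∂²f/∂y²). Then Δf is radial and A(Δf)(t) = (Af)″(t) − (1/4)(Af)(t) for all t ∈ ℝ, where A is the Abel transform. -/

import Mathlib

open MeasureTheory Real Complex Set

noncomputable section

/-- The hyperbolic distance on the upper half-plane `H² = {z : ℂ | 0 < Im z}`. -/
def dH (z w : ℂ) : ℝ :=
  2 * Real.arsinh (‖z - w‖ / (2 * Real.sqrt (z.im * w.im)))

/-- A function on the upper half-plane is radial if its value at `z` depends only on the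
hyperbolic distance `d(i,z)`. -/
def IsRadial (f : ℂ → ℂ) : Prop :=
  ∀ z w : ℂ, 0 < z.im → 0 < w.im → dH Complex.I z = dH Complex.I w → f z = f w

/-- The hyperbolic Laplacian `Δf = y²(∂²f/∂x² + ∂²f/∂y²)` on the upper half-plane. -/
def hypLaplacian (f : ℂ → ℂ) (z : ℂ) : ℂ :=
  ((z.im ^ 2 : ℝ) : ℂ) *
    (iteratedDeriv 2 (fun x : ℝ => f ((x : ℂ) + (z.im : ℂ) * Complex.I)) z.re +
      iteratedDeriv 2 (fun y : ℝ => f ((z.re : ℂ) + (y : ℂ) * Complex.I)) z.im)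

/-- The Abel transform of a radial function on the hyperbolic plane:
`(Af)(t) = e^{−t/2} ∫_ℝ f(x + i e^t) dx`. -/
def abelT (f : ℂ → ℂ) (t : ℝ) : ℂ :=
  ((Real.exp (-t / 2) : ℝ) : ℂ) * ∫ x : ℝ, f ((x : ℂ) + (Real.exp t : ℂ) * Complex.I)

namespace Stmt9

/-- directional derivative -/
def dd (v : ℂ) (f : ℂ → ℂ) (z : ℂ) : ℂ := fderiv ℝ f z v

lemma contDiff_dd (v : ℂ) {f : ℂ → ℂ} (hf : ContDiff ℝ (⊤ : ℕ∞) f) : ContDiff ℝ (⊤ : ℕ∞) (dd v f) :=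
  (ContinuousLinearMap.apply ℝ ℂ v).contDiff.comp (hf.fderiv_right (by simp))

lemma hcs_dd (v : ℂ) {f : ℂ → ℂ} (hfc : HasCompactSupport f) :
    HasCompactSupport (dd v f) := hfc.fderiv_apply ℝ v

lemma hasDerivAt_horiz {f : ℂ → ℂ} {x y : ℝ}
    (hfd : DifferentiableAt ℝ f ((x:ℂ) + (y:ℂ) * Complex.I)) :
    HasDerivAt (fun x : ℝ => f ((x:ℂ) + (y:ℂ) * Complex.I))
      (dd 1 f ((x:ℂ) + (y:ℂ) * Complex.I)) x := by
  have hL : HasDerivAt (fun x : ℝ => ((x:ℂ) + (y:ℂ) * Complex.I)) 1 x := by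
    simpa using (Complex.ofRealCLM.hasDerivAt (x := x)).add_const ((y:ℂ) * Complex.I)
  exact hfd.hasFDerivAt.comp_hasDerivAt x hL

lemma hasDerivAt_vert {f : ℂ → ℂ} {x y : ℝ}
    (hfd : DifferentiableAt ℝ f ((x:ℂ) + (y:ℂ) * Complex.I)) :
    HasDerivAt (fun y : ℝ => f ((x:ℂ) + (y:ℂ) * Complex.I))
      (dd Complex.I f ((x:ℂ) + (y:ℂ) * Complex.I)) y := by
  have hL : HasDerivAt (fun y : ℝ => ((x:ℂ) + (y:ℂ) * Complex.I)) Complex.I y := by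
    simpa using ((Complex.ofRealCLM.hasDerivAt (x := y)).mul_const Complex.I).const_add (x:ℂ)
  exact hfd.hasFDerivAt.comp_hasDerivAt y hL

lemma diffAt_dd {f : ℂ → ℂ} {z : ℂ} (v : ℂ) (hf : ContDiffAt ℝ 2 f z) :
    DifferentiableAt ℝ (dd v f) z := by
  have h1 : ContDiffAt ℝ 1 (fderiv ℝ f) z := hf.fderiv_right (le_refl _)
  exact (h1.differentiableAt one_ne_zero).clm_apply (differentiableAt_const v)

lemma iter2_horiz_local {h : ℂ → ℂ} {U : Set ℂ} (hU : IsOpen U)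
    (hh : ∀ w ∈ U, ContDiffAt ℝ 2 h w) {x y : ℝ} (hz : (x:ℂ) + (y:ℂ) * Complex.I ∈ U) :
    iteratedDeriv 2 (fun x : ℝ => h ((x:ℂ) + (y:ℂ) * Complex.I)) x
      = dd 1 (dd 1 h) ((x:ℂ) + (y:ℂ) * Complex.I) := by
  have hcont : ContinuousAt (fun x' : ℝ => ((x':ℂ) + (y:ℂ) * Complex.I)) x := by fun_prop
  have hmem : ∀ᶠ (x' : ℝ) in nhds x, ((x':ℂ) + (y:ℂ) * Complex.I) ∈ U :=
    hcont.eventually_mem (hU.mem_nhds hz)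
  rw [iteratedDeriv_succ, iteratedDeriv_one]
  have h1 : (deriv fun x' : ℝ => h ((x':ℂ) + (y:ℂ) * Complex.I))
      =ᶠ[nhds x] fun x' : ℝ => dd 1 h ((x':ℂ) + (y:ℂ) * Complex.I) := by
    filter_upwards [hmem] with x' hx'
    exact (hasDerivAt_horiz ((hh _ hx').differentiableAt (by norm_num))).deriv
  rw [h1.deriv_eq]
  exact (hasDerivAt_horiz (diffAt_dd 1 (hh _ hz))).deriv

lemma iter2_vert_local {h : ℂ → ℂ} {U : Set ℂ} (hU : IsOpen U)
    (hh : ∀ w ∈ U, ContDiffAt ℝ 2 h w) {x y : ℝ} (hz : (x:ℂ) + (y:ℂ) * Complex.I ∈ U) :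
    iteratedDeriv 2 (fun y : ℝ => h ((x:ℂ) + (y:ℂ) * Complex.I)) y
      = dd Complex.I (dd Complex.I h) ((x:ℂ) + (y:ℂ) * Complex.I) := by
  have hcont : ContinuousAt (fun y' : ℝ => ((x:ℂ) + (y':ℂ) * Complex.I)) y := by fun_prop
  have hmem : ∀ᶠ (y' : ℝ) in nhds y, ((x:ℂ) + (y':ℂ) * Complex.I) ∈ U :=
    hcont.eventually_mem (hU.mem_nhds hz)
  rw [iteratedDeriv_succ, iteratedDeriv_one]
  have h1 : (deriv fun y' : ℝ => h ((x:ℂ) + (y':ℂ) * Complex.I))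
      =ᶠ[nhds y] fun y' : ℝ => dd Complex.I h ((x:ℂ) + (y':ℂ) * Complex.I) := by
    filter_upwards [hmem] with y' hy'
    exact (hasDerivAt_vert ((hh _ hy').differentiableAt (by norm_num))).deriv
  rw [h1.deriv_eq]
  exact (hasDerivAt_vert (diffAt_dd Complex.I (hh _ hz))).deriv

lemma hypLaplacian_eq_local {h : ℂ → ℂ} {U : Set ℂ} (hU : IsOpen U)
    (hh : ∀ w ∈ U, ContDiffAt ℝ 2 h w) {z : ℂ} (hz : z ∈ U) :
    hypLaplacian h z
      = ((z.im ^ 2 : ℝ) : ℂ) * (dd 1 (dd 1 h) z + dd Complex.I (dd Complex.I h) z) := by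
  have hz' : (z.re : ℂ) + (z.im : ℂ) * Complex.I ∈ U := by rwa [Complex.re_add_im]
  rw [hypLaplacian, iter2_horiz_local hU hh hz', iter2_vert_local hU hh hz', Complex.re_add_im]

lemma hypLaplacian_eq {h : ℂ → ℂ} (hh : ContDiff ℝ (⊤ : ℕ∞) h) (z : ℂ) :
    hypLaplacian h z
      = ((z.im ^ 2 : ℝ) : ℂ) * (dd 1 (dd 1 h) z + dd Complex.I (dd Complex.I h) z) :=
  hypLaplacian_eq_local isOpen_univ (fun w _ => (hh.of_le (by exact WithTop.coe_le_coe.mpr le_top)).contDiffAt) (mem_univ z)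


lemma isometry_line (y : ℝ) : Isometry (fun x : ℝ => ((x:ℂ) + (y:ℂ) * Complex.I)) := by
  have h1 : Isometry (fun w : ℂ => w + (y:ℂ) * Complex.I) := isometry_add_right _
  exact h1.comp Complex.isometry_ofReal

lemma hcs_line {g : ℂ → ℂ} (hgc : HasCompactSupport g) (y : ℝ) :
    HasCompactSupport (fun x : ℝ => g ((x:ℂ) + (y:ℂ) * Complex.I)) :=
  hgc.comp_isClosedEmbedding (isometry_line y).isClosedEmbedding

lemma integrable_line {g : ℂ → ℂ} (hg : Continuous g) (hgc : HasCompactSupport g) (y : ℝ) :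
    Integrable (fun x : ℝ => g ((x:ℂ) + (y:ℂ) * Complex.I)) :=
  (hg.comp (isometry_line y).continuous).integrable_of_hasCompactSupport (hcs_line hgc y)



/-- integral of second horizontal derivative vanishes -/
lemma integral_ddx_zero {g : ℂ → ℂ} (hg : ContDiff ℝ (⊤ : ℕ∞) g) (hgc : HasCompactSupport g) (y : ℝ) :
    ∫ x : ℝ, dd 1 (dd 1 g) ((x:ℂ) + (y:ℂ) * Complex.I) = 0 := by
  set h : ℝ → ℂ := fun x => dd 1 g ((x:ℂ) + (y:ℂ) * Complex.I) with hh
  have hdg : ContDiff ℝ (⊤ : ℕ∞) (dd 1 g) := contDiff_dd 1 hg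
  have hline : ContDiff ℝ (⊤ : ℕ∞) (fun x : ℝ => ((x:ℂ) + (y:ℂ) * Complex.I)) :=
    (Complex.ofRealCLM.contDiff).add contDiff_const
  have hhc : ContDiff ℝ 1 h := (hdg.comp hline).of_le (by simp)
  have hhs : HasCompactSupport h := hcs_line (hcs_dd 1 hgc) y
  have hder : (deriv h) = fun x : ℝ => dd 1 (dd 1 g) ((x:ℂ) + (y:ℂ) * Complex.I) := by
    funext x
    exact (hasDerivAt_horiz (hdg.differentiable (by simp) _)).deriv
  rw [← hder]
  have hint : Integrable (deriv h) := by
    rw [hder]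
    exact integrable_line ((contDiff_dd 1 hdg).continuous) (hcs_dd 1 (hcs_dd 1 hgc)) y
  rw [← setIntegral_univ, ← Set.Iic_union_Ioi (a := (0:ℝ)),
    setIntegral_union (Set.Iic_disjoint_Ioi le_rfl) measurableSet_Ioi hint.integrableOn
      hint.integrableOn,
    hhs.integral_Iic_deriv_eq hhc, hhs.integral_Ioi_deriv_eq hhc]
  ring

/-- differentiation under the integral sign -/
lemma hasDerivAt_intF {g : ℂ → ℂ} (hg : ContDiff ℝ (⊤ : ℕ∞) g) (hgc : HasCompactSupport g) (y₀ : ℝ) :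
    HasDerivAt (fun y : ℝ => ∫ x : ℝ, g ((x:ℂ) + (y:ℂ) * Complex.I))
      (∫ x : ℝ, dd Complex.I g ((x:ℂ) + (y₀:ℂ) * Complex.I)) y₀ := by
  obtain ⟨R, hR⟩ : ∃ R, tsupport g ⊆ Metric.closedBall 0 R :=
    hgc.isCompact.isBounded.subset_closedBall 0
  obtain ⟨M, hM⟩ : ∃ M, ∀ z, ‖dd Complex.I g z‖ ≤ M := by
    have hb := ((contDiff_dd Complex.I hg).continuous.norm).bddAbove_range_of_hasCompactSupport
      (hcs_dd Complex.I hgc).norm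
    obtain ⟨M, hM⟩ := hb
    exact ⟨M, fun z => hM (Set.mem_range_self z)⟩
  set bound : ℝ → ℝ := (Metric.closedBall (0:ℝ) R).indicator (fun _ => M) with hbound
  have key := hasDerivAt_integral_of_dominated_loc_of_deriv_le (μ := volume)
    (F := fun (y : ℝ) (x : ℝ) => g ((x:ℂ) + (y:ℂ) * Complex.I))
    (F' := fun (y : ℝ) (x : ℝ) => dd Complex.I g ((x:ℂ) + (y:ℂ) * Complex.I))
    (x₀ := y₀) (bound := bound) (s := Metric.ball y₀ 1) (Metric.ball_mem_nhds y₀ one_pos) ?_ ?_ ?_ ?_ ?_ ?_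
  · exact key.2
  · exact Filter.Eventually.of_forall fun y =>
      (hg.continuous.comp (isometry_line y).continuous).aestronglyMeasurable
  · exact integrable_line hg.continuous hgc y₀
  · exact ((contDiff_dd Complex.I hg).continuous.comp
      (isometry_line y₀).continuous).aestronglyMeasurable
  · refine Filter.Eventually.of_forall fun x => fun y _ => ?_
    by_cases hx : x ∈ Metric.closedBall (0:ℝ) R
    · calc ‖dd Complex.I g ((x:ℂ) + (y:ℂ) * Complex.I)‖ ≤ M := hM _
        _ = bound x := by rw [hbound, Set.indicator_of_mem hx]
    · have hz : ((x:ℂ) + (y:ℂ) * Complex.I) ∉ tsupport g := by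
        intro hmem
        apply hx
        have := hR hmem
        simp only [Metric.mem_closedBall, dist_zero_right] at this ⊢
        calc |x| = |((x:ℂ) + (y:ℂ) * Complex.I).re| := by simp
          _ ≤ ‖(x:ℂ) + (y:ℂ) * Complex.I‖ := Complex.abs_re_le_norm _
          _ ≤ R := by simpa using this
      have hz0 : dd Complex.I g ((x:ℂ) + (y:ℂ) * Complex.I) = 0 := by
        have : fderiv ℝ g ((x:ℂ) + (y:ℂ) * Complex.I) = 0 := by
          apply Function.notMem_support.mp
          intro hs
          exact hz (support_fderiv_subset ℝ hs)
        simp [dd, this]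
      simp only [hz0, norm_zero, hbound, Set.indicator_of_notMem hx]
      exact le_refl 0
  · exact (integrableOn_const (by exact measure_closedBall_lt_top.ne)).integrable_indicator
      measurableSet_closedBall
  · exact Filter.Eventually.of_forall fun x => fun y _ =>
      hasDerivAt_vert (hg.differentiable (by simp) _)


/-- rotation Möbius map fixing `i` -/
def mob (θ : ℝ) (z : ℂ) : ℂ :=
  ((Real.cos θ : ℂ) * z - (Real.sin θ : ℂ)) / ((Real.sin θ : ℂ) * z + (Real.cos θ : ℂ))

lemma den_ne {θ : ℝ} {z : ℂ} (hz : 0 < z.im) :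
    (Real.sin θ : ℂ) * z + (Real.cos θ : ℂ) ≠ 0 := by
  intro h
  have him : Real.sin θ * z.im = 0 := by
    have := congrArg Complex.im h
    simp only [Complex.add_im, Complex.mul_im, Complex.ofReal_re, Complex.ofReal_im,
      Complex.zero_im] at this
    linarith
  rcases mul_eq_zero.1 him with hs | hy
  · have hre : Real.cos θ = 0 := by
      have := congrArg Complex.re h
      simp [hs] at this
      simpa [hs, Complex.cos_ofReal_re] using this
    have := Real.sin_sq_add_cos_sq θ
    rw [hs, hre] at this
    norm_num at this
  · exact absurd hy (ne_of_gt hz)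

lemma normSq_den_pos {θ : ℝ} {z : ℂ} (hz : 0 < z.im) :
    0 < Complex.normSq ((Real.sin θ : ℂ) * z + (Real.cos θ : ℂ)) :=
  Complex.normSq_pos.2 (den_ne hz)

lemma im_mob {θ : ℝ} {z : ℂ} (hz : 0 < z.im) :
    (mob θ z).im = z.im / Complex.normSq ((Real.sin θ : ℂ) * z + (Real.cos θ : ℂ)) := by
  have hd := den_ne (θ := θ) hz
  rw [mob, Complex.div_im]
  have h1 : ((Real.cos θ : ℂ) * z - (Real.sin θ : ℂ)).im = Real.cos θ * z.im := by simp only [Complex.add_im, Complex.add_re, Complex.sub_re, Complex.sub_im, Complex.mul_re, Complex.mul_im, Complex.ofReal_re, Complex.ofReal_im]; ring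
  have h2 : ((Real.cos θ : ℂ) * z - (Real.sin θ : ℂ)).re
      = Real.cos θ * z.re - Real.sin θ := by simp only [Complex.add_im, Complex.add_re, Complex.sub_re, Complex.sub_im, Complex.mul_re, Complex.mul_im, Complex.ofReal_re, Complex.ofReal_im]; ring
  have h3 : ((Real.sin θ : ℂ) * z + (Real.cos θ : ℂ)).re
      = Real.sin θ * z.re + Real.cos θ := by simp only [Complex.add_im, Complex.add_re, Complex.sub_re, Complex.sub_im, Complex.mul_re, Complex.mul_im, Complex.ofReal_re, Complex.ofReal_im]; ring
  have h4 : ((Real.sin θ : ℂ) * z + (Real.cos θ : ℂ)).im = Real.sin θ * z.im := by simp only [Complex.add_im, Complex.add_re, Complex.sub_re, Complex.sub_im, Complex.mul_re, Complex.mul_im, Complex.ofReal_re, Complex.ofReal_im]; ring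
  rw [h1, h2, h3, h4, div_sub_div_same]
  congr 1
  linear_combination z.im * Real.sin_sq_add_cos_sq θ

lemma im_mob_pos {θ : ℝ} {z : ℂ} (hz : 0 < z.im) : 0 < (mob θ z).im := by
  rw [im_mob hz]
  exact div_pos hz (normSq_den_pos hz)

lemma dH_mob {θ : ℝ} {z : ℂ} (hz : 0 < z.im) : dH Complex.I (mob θ z) = dH Complex.I z := by
  have hd := den_ne (θ := θ) hz
  set s := Real.sin θ
  set c := Real.cos θ
  set N := Complex.normSq ((s : ℂ) * z + (c : ℂ)) with hN
  have hNpos : 0 < N := normSq_den_pos hz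
  have hmul : mob θ z * ((s:ℂ) * z + (c:ℂ)) = (c:ℂ) * z - (s:ℂ) :=
    div_mul_cancel₀ _ hd
  have hid2 : (Complex.I - mob θ z) * ((s:ℂ) * z + (c:ℂ))
      = ((s:ℂ) * Complex.I - (c:ℂ)) * (z - Complex.I) := by
    rw [sub_mul, hmul]
    linear_combination (s:ℂ) * Complex.I_sq
  have hid : Complex.I - mob θ z
      = ((s:ℂ) * Complex.I - (c:ℂ)) * (z - Complex.I) / ((s:ℂ) * z + (c:ℂ)) := by
    rw [eq_div_iff hd]; exact hid2
  have habs1 : ‖(s:ℂ) * Complex.I - (c:ℂ)‖ = 1 := by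
    rw [Complex.norm_def]
    have h5 : Complex.normSq ((s:ℂ) * Complex.I - (c:ℂ)) = 1 := by
      rw [Complex.normSq_apply]
      simp only [Complex.sub_re, Complex.sub_im, Complex.mul_re, Complex.mul_im,
        Complex.ofReal_re, Complex.ofReal_im, Complex.I_re, Complex.I_im]
      linear_combination Real.sin_sq_add_cos_sq θ
    rw [h5, Real.sqrt_one]
  have habsden : ‖(s:ℂ) * z + (c:ℂ)‖ = Real.sqrt N := by
    rw [Complex.norm_def, ← hN]
  have habs : ‖Complex.I - mob θ z‖
      = ‖Complex.I - z‖ / Real.sqrt N := by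
    rw [hid, norm_div, norm_mul, habs1, one_mul, habsden,
      norm_sub_rev z Complex.I]
  have him : (mob θ z).im = z.im / N := im_mob hz
  rw [dH, dH, habs, him, Complex.I_im, one_mul, one_mul, Real.sqrt_div hz.le]
  have hsN : Real.sqrt N ≠ 0 := by positivity
  have hsy : Real.sqrt z.im ≠ 0 := by positivity
  congr 2
  field_simp


lemma exists_rot {z w : ℂ} (hz : 0 < z.im) (hw : 0 < w.im)
    (hd : dH Complex.I z = dH Complex.I w) : ∃ θ : ℝ, mob θ z = w := by
  -- Step 1: the basic distance relation
  have hE : Complex.normSq (z - Complex.I) * w.im = Complex.normSq (w - Complex.I) * z.im := by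
    have h1 : Real.arsinh (‖Complex.I - z‖ / (2 * Real.sqrt (1 * z.im)))
        = Real.arsinh (‖Complex.I - w‖ / (2 * Real.sqrt (1 * w.im))) := by
      have := hd
      rw [dH, dH, Complex.I_im] at this
      linarith
    have h2 := Real.arsinh_injective h1
    rw [one_mul, one_mul] at h2
    have hsz : (0:ℝ) < Real.sqrt z.im := Real.sqrt_pos.2 hz
    have hsw : (0:ℝ) < Real.sqrt w.im := Real.sqrt_pos.2 hw
    have h3 : ‖Complex.I - z‖ * Real.sqrt w.im
        = ‖Complex.I - w‖ * Real.sqrt z.im := by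
      field_simp at h2
      linarith
    have h4 := congrArg (fun r : ℝ => r^2) h3
    simp only [mul_pow, Complex.sq_norm, Real.sq_sqrt hz.le, Real.sq_sqrt hw.le] at h4
    rw [← neg_sub z Complex.I, ← neg_sub w Complex.I, Complex.normSq_neg,
      Complex.normSq_neg] at h4
    exact h4
  -- Step 2: the ratio (1 + w z)/(z - w) is real
  have hIm : ((1 + w * z) * (starRingEnd ℂ) (z - w)).im = 0 := by
    simp only [Complex.mul_im, Complex.add_re, Complex.add_im, Complex.mul_re,
      Complex.one_re, Complex.one_im, Complex.conj_re, Complex.conj_im,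
      Complex.sub_re, Complex.sub_im] at *
    simp only [Complex.normSq_apply, Complex.sub_re, Complex.sub_im, Complex.I_re,
      Complex.I_im] at hE
    linear_combination hE
  by_cases hzw : z = w
  · refine ⟨0, ?_⟩
    rw [mob, hzw]
    push_cast [Real.cos_zero, Real.sin_zero]
    simp
  · have hsub : z - w ≠ 0 := sub_ne_zero.2 hzw
    set ζ : ℂ := (1 + w * z) * (starRingEnd ℂ) (z - w) with hζdef
    have hζre : ζ = ((ζ.re : ℝ) : ℂ) := Complex.ext rfl (by simpa using hIm)
    set r : ℝ := ζ.re / Complex.normSq (z - w) with hrdef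
    have hNzw : (0:ℝ) < Complex.normSq (z - w) := Complex.normSq_pos.2 hsub
    have key : (1 : ℂ) + w * z = (r : ℂ) * (z - w) := by
      have h5 : ζ * (z - w) = (1 + w * z) * ((Complex.normSq (z - w) : ℝ) : ℂ) := by
        rw [hζdef, mul_assoc, ← Complex.normSq_eq_conj_mul_self]
      have h6 : ((ζ.re : ℝ) : ℂ) * (z - w) = (1 + w * z) * ((Complex.normSq (z - w) : ℝ) : ℂ) := by
        rw [← hζre]; exact h5
      rw [hrdef]
      push_cast
      rw [div_mul_eq_mul_div, eq_comm, div_eq_iff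
        (show ((Complex.normSq (z - w) : ℝ) : ℂ) ≠ 0 by exact_mod_cast hNzw.ne')]
      exact h6
    -- Step 3: construct the angle
    have h1r : (0:ℝ) < 1 + r^2 := by positivity
    have hs1r : (0:ℝ) < Real.sqrt (1 + r^2) := Real.sqrt_pos.2 h1r
    have habs : |r / Real.sqrt (1 + r^2)| ≤ 1 := by
      rw [abs_div, abs_of_pos hs1r, div_le_one hs1r]
      rw [← Real.sqrt_sq_eq_abs]
      exact Real.sqrt_le_sqrt (by nlinarith)
    refine ⟨Real.arccos (r / Real.sqrt (1 + r^2)), ?_⟩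
    have hcos : Real.cos (Real.arccos (r / Real.sqrt (1 + r^2))) = r / Real.sqrt (1 + r^2) :=
      Real.cos_arccos (neg_le_of_abs_le habs) (le_of_abs_le habs)
    have hsin : Real.sin (Real.arccos (r / Real.sqrt (1 + r^2))) = 1 / Real.sqrt (1 + r^2) := by
      rw [Real.sin_arccos]
      rw [show 1 - (r / Real.sqrt (1 + r^2))^2 = 1 / (1 + r^2) by
        rw [div_pow, Real.sq_sqrt h1r.le]; field_simp; ring]
      rw [one_div, one_div, Real.sqrt_inv]
    set θ := Real.arccos (r / Real.sqrt (1 + r^2))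
    have hcs : Real.cos θ = r * Real.sin θ := by
      rw [hcos, hsin]; ring
    rw [mob, div_eq_iff (den_ne hz)]
    have hcsC : ((Real.cos θ : ℝ) : ℂ) = ((r:ℝ):ℂ) * ((Real.sin θ : ℝ):ℂ) := by
      exact_mod_cast congrArg (fun t : ℝ => ((t:ℝ):ℂ)) hcs
    linear_combination (-((Real.sin θ : ℝ):ℂ)) * key + (z - w) * hcsC


/-- the complex derivative of `mob θ` -/
def mobd (θ : ℝ) (z : ℂ) : ℂ := ((((Real.sin θ : ℂ) * z + (Real.cos θ : ℂ))) ^ 2)⁻¹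


lemma isOpen_H : IsOpen {w : ℂ | 0 < w.im} := isOpen_lt continuous_const Complex.continuous_im

lemma one_eq_sincos (θ : ℝ) :
    ((Real.sin θ : ℂ))^2 + ((Real.cos θ : ℂ))^2 = 1 := by
  have h := Real.sin_sq_add_cos_sq θ
  rw [← Complex.ofReal_pow, ← Complex.ofReal_pow, ← Complex.ofReal_add, h, Complex.ofReal_one]

lemma hasDerivAt_mob {θ : ℝ} {z : ℂ} (hz : 0 < z.im) :
    HasDerivAt (mob θ) (mobd θ z) z := by
  have hd := den_ne (θ := θ) hz
  have h1 : HasDerivAt (fun w : ℂ => (Real.cos θ : ℂ) * w - (Real.sin θ : ℂ))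
      (Real.cos θ : ℂ) z := by
    simpa using ((hasDerivAt_id z).const_mul (Real.cos θ : ℂ)).sub_const (Real.sin θ : ℂ)
  have h2 : HasDerivAt (fun w : ℂ => (Real.sin θ : ℂ) * w + (Real.cos θ : ℂ))
      (Real.sin θ : ℂ) z := by
    simpa using ((hasDerivAt_id z).const_mul (Real.sin θ : ℂ)).add_const (Real.cos θ : ℂ)
  have h3 : HasDerivAt (mob θ) _ z := h1.div h2 hd
  convert h3 using 1
  rw [mobd, inv_eq_one_div]
  congr 1
  linear_combination -one_eq_sincos θ

lemma hasDerivAt_mobd {θ : ℝ} {z : ℂ} (hz : 0 < z.im) :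
    ∃ c₂ : ℂ, HasDerivAt (mobd θ) c₂ z := by
  have hd := den_ne (θ := θ) hz
  have h2 : HasDerivAt (fun w : ℂ => (Real.sin θ : ℂ) * w + (Real.cos θ : ℂ))
      (Real.sin θ : ℂ) z := by
    simpa using ((hasDerivAt_id z).const_mul (Real.sin θ : ℂ)).add_const (Real.cos θ : ℂ)
  have h3 := (h2.pow 2).inv (pow_ne_zero 2 hd)
  exact ⟨_, h3⟩

lemma contDiffAt_mob {θ : ℝ} {z : ℂ} (hz : 0 < z.im) :
    ContDiffAt ℝ (⊤ : ℕ∞) (mob θ) z := by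
  have hd := den_ne (θ := θ) hz
  have hC : ContDiffAt ℂ (⊤ : ℕ∞) (mob θ) z := by
    unfold mob
    exact ContDiffAt.div
      ((contDiff_const.mul contDiff_id).sub contDiff_const).contDiffAt
      ((contDiff_const.mul contDiff_id).add contDiff_const).contDiffAt hd
  exact hC.restrict_scalars ℝ

/-- first-order chain rule -/
lemma dd_comp {f : ℂ → ℂ} (hf : ContDiff ℝ (⊤ : ℕ∞) f) (θ : ℝ) (v : ℂ) {w : ℂ} (hw : 0 < w.im) :
    dd v (f ∘ mob θ) w = fderiv ℝ f (mob θ w) (v * mobd θ w) := by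
  have hgw : HasDerivAt (mob θ) (mobd θ w) w := hasDerivAt_mob hw
  have hfq : HasFDerivAt f (fderiv ℝ f (mob θ w)) (mob θ w) :=
    (hf.differentiable (by simp) (mob θ w)).hasFDerivAt
  have hc := hfq.comp w (hgw.hasFDerivAt.restrictScalars ℝ)
  rw [dd, hc.fderiv]
  simp [ContinuousLinearMap.smulRight_apply, smul_eq_mul]

/-- second-order chain rule, diagonal direction -/
lemma dd2_comp {f : ℂ → ℂ} (hf : ContDiff ℝ (⊤ : ℕ∞) f) (θ : ℝ) (v : ℂ) {z : ℂ} (hz : 0 < z.im)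
    {c₂ : ℂ} (hc₂ : HasDerivAt (mobd θ) c₂ z) :
    dd v (dd v (f ∘ mob θ)) z
      = (fderiv ℝ (fderiv ℝ f) (mob θ z) (v * mobd θ z)) (v * mobd θ z)
        + fderiv ℝ f (mob θ z) (v * v * c₂) := by
  have hev : dd v (f ∘ mob θ) =ᶠ[nhds z]
      fun w => (fderiv ℝ f (mob θ w)) (v * mobd θ w) := by
    filter_upwards [isOpen_H.mem_nhds hz] with w hw
    exact dd_comp hf θ v hw
  have hA : HasFDerivAt (fun w => fderiv ℝ f (mob θ w))
      ((fderiv ℝ (fderiv ℝ f) (mob θ z)).comp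
        (((1 : ℂ →L[ℂ] ℂ).smulRight (mobd θ z)).restrictScalars ℝ)) z := by
    have hf' : HasFDerivAt (fderiv ℝ f) (fderiv ℝ (fderiv ℝ f) (mob θ z)) (mob θ z) :=
      ((hf.fderiv_right (m := (⊤ : ℕ∞)) (by simp)).differentiable (by simp) (mob θ z)).hasFDerivAt
    exact hf'.comp z ((hasDerivAt_mob hz).hasFDerivAt.restrictScalars ℝ)
  have hu : HasFDerivAt (fun w => v * mobd θ w)
      (((1 : ℂ →L[ℂ] ℂ).smulRight (v * c₂)).restrictScalars ℝ) z :=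
    (hc₂.const_mul v).hasFDerivAt.restrictScalars ℝ
  have happ := hA.clm_apply hu
  rw [dd, hev.fderiv_eq, happ.fderiv]
  simp [ContinuousLinearMap.smulRight_apply, smul_eq_mul]
  ring

/-- the bilinear identity -/
lemma bilin (D2 : ℂ →L[ℝ] ℂ →L[ℝ] ℂ) (a b : ℝ) :
    D2 ((a:ℂ) + (b:ℂ)*Complex.I) ((a:ℂ) + (b:ℂ)*Complex.I)
      + D2 (Complex.I*((a:ℂ) + (b:ℂ)*Complex.I)) (Complex.I*((a:ℂ) + (b:ℂ)*Complex.I))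
      = (a^2 + b^2 : ℝ) • (D2 1 1 + D2 Complex.I Complex.I) := by
  have h1 : (a:ℂ) + (b:ℂ)*Complex.I = a • (1:ℂ) + b • Complex.I := by
    simp [Complex.real_smul]
  have h2 : Complex.I*((a:ℂ) + (b:ℂ)*Complex.I) = (-b) • (1:ℂ) + a • Complex.I := by
    simp [Complex.real_smul]
    linear_combination (b:ℂ) * Complex.I_sq
  rw [h2, h1]
  simp only [map_add, _root_.map_smul, ContinuousLinearMap.add_apply,
    ContinuousLinearMap.coe_smul', Pi.smul_apply, ContinuousLinearMap.smul_apply, smul_add]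
  module


lemma dd_dd {f : ℂ → ℂ} (hf : ContDiff ℝ (⊤ : ℕ∞) f) (v : ℂ) (q : ℂ) :
    dd v (dd v f) q = (fderiv ℝ (fderiv ℝ f) q v) v := by
  have hg : DifferentiableAt ℝ (fderiv ℝ f) q :=
    ((hf.fderiv_right (m := (⊤ : ℕ∞)) (by simp)).differentiable (by simp) q)
  have hcomp := ((ContinuousLinearMap.apply ℝ ℂ v).hasFDerivAt.comp q hg.hasFDerivAt).fderiv
  rw [Function.comp_def] at hcomp
  rw [dd, show dd v f = fun w => (ContinuousLinearMap.apply ℝ ℂ v) (fderiv ℝ f w) from rfl,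
    hcomp]
  simp

lemma comp_lap {f : ℂ → ℂ} (hf : ContDiff ℝ (⊤ : ℕ∞) f) (θ : ℝ) {z : ℂ} (hz : 0 < z.im) :
    hypLaplacian (f ∘ mob θ) z = hypLaplacian f (mob θ z) := by
  obtain ⟨c₂, hc₂⟩ := hasDerivAt_mobd (θ := θ) hz
  have hsm : ∀ w ∈ {w : ℂ | 0 < w.im}, ContDiffAt ℝ 2 (f ∘ mob θ) w := fun w hw =>
    (hf.contDiffAt.of_le (by exact WithTop.coe_le_coe.mpr le_top)).comp w ((contDiffAt_mob hw).of_le (by exact WithTop.coe_le_coe.mpr le_top))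
  rw [hypLaplacian_eq_local isOpen_H hsm hz, hypLaplacian_eq hf (mob θ z),
    dd2_comp hf θ 1 hz hc₂, dd2_comp hf θ Complex.I hz hc₂,
    dd_dd hf 1 (mob θ z), dd_dd hf Complex.I (mob θ z)]
  set q := mob θ z with hq
  set D2 := fderiv ℝ (fderiv ℝ f) q
  set L := fderiv ℝ f q
  set c := mobd θ z with hc
  have hI : Complex.I * Complex.I * c₂ = -(1 * 1 * c₂) := by
    rw [Complex.I_mul_I]; ring
  have hcancel : L (1 * 1 * c₂) + L (Complex.I * Complex.I * c₂) = 0 := by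
    rw [hI, map_neg]; ring
  have hb := bilin D2 c.re c.im
  rw [Complex.re_add_im] at hb
  have hone : (1 : ℂ) * c = c := one_mul c
  -- scalar identity
  have hN : 0 < Complex.normSq ((Real.sin θ : ℂ) * z + (Real.cos θ : ℂ)) := normSq_den_pos hz
  have hsc : (z.im ^ 2 * (c.re ^ 2 + c.im ^ 2) : ℝ) = q.im ^ 2 := by
    have h1 : c.re ^ 2 + c.im ^ 2 = Complex.normSq c := by
      rw [Complex.normSq_apply]; ring
    have h2 : Complex.normSq c
        = (Complex.normSq ((Real.sin θ : ℂ) * z + (Real.cos θ : ℂ)) ^ 2)⁻¹ := by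
      rw [hc, mobd, map_inv₀, map_pow]
    have h3 : q.im = z.im / Complex.normSq ((Real.sin θ : ℂ) * z + (Real.cos θ : ℂ)) :=
      im_mob hz
    rw [h1, h2, h3, div_pow]
    field_simp
  calc ((z.im ^ 2 : ℝ) : ℂ) * ((D2 (1 * c)) (1 * c) + L (1 * 1 * c₂)
        + ((D2 (Complex.I * c)) (Complex.I * c) + L (Complex.I * Complex.I * c₂)))
      = ((z.im ^ 2 : ℝ) : ℂ) * ((D2 c) c + (D2 (Complex.I * c)) (Complex.I * c)) := by
        rw [hone]
        have : (D2 c) c + L (1 * 1 * c₂)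
            + ((D2 (Complex.I * c)) (Complex.I * c) + L (Complex.I * Complex.I * c₂))
            = (D2 c) c + (D2 (Complex.I * c)) (Complex.I * c)
              + (L (1 * 1 * c₂) + L (Complex.I * Complex.I * c₂)) := by ring
        rw [this, hcancel, add_zero]
    _ = ((z.im ^ 2 : ℝ) : ℂ) * ((c.re ^ 2 + c.im ^ 2 : ℝ)
          • ((D2 1) 1 + (D2 Complex.I) Complex.I)) := by rw [hb]
    _ = ((q.im ^ 2 : ℝ) : ℂ) * ((D2 1) 1 + (D2 Complex.I) Complex.I) := by
        rw [Complex.real_smul, ← mul_assoc, ← Complex.ofReal_mul, hsc]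

lemma hypLaplacian_congr {f₁ f₂ : ℂ → ℂ} {z : ℂ} (h : f₁ =ᶠ[nhds z] f₂) :
    hypLaplacian f₁ z = hypLaplacian f₂ z := by
  have ht1 : Filter.Tendsto (fun x : ℝ => ((x:ℂ) + (z.im:ℂ) * Complex.I)) (nhds z.re)
      (nhds z) := by
    have hcont : ContinuousAt (fun x : ℝ => ((x:ℂ) + (z.im:ℂ) * Complex.I)) z.re :=
      ((Complex.ofRealCLM.continuous).add continuous_const).continuousAt
    simpa [Complex.re_add_im] using hcont.tendsto
  have ht2 : Filter.Tendsto (fun y : ℝ => ((z.re:ℂ) + (y:ℂ) * Complex.I)) (nhds z.im)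
      (nhds z) := by
    have hcont : ContinuousAt (fun y : ℝ => ((z.re:ℂ) + (y:ℂ) * Complex.I)) z.im := by
      exact (continuous_const.add ((Complex.ofRealCLM.continuous).mul
        continuous_const)).continuousAt
    simpa [Complex.re_add_im] using hcont.tendsto
  have h1 : (fun x : ℝ => f₁ ((x:ℂ) + (z.im:ℂ) * Complex.I))
      =ᶠ[nhds z.re] fun x : ℝ => f₂ ((x:ℂ) + (z.im:ℂ) * Complex.I) := ht1.eventually h
  have h2 : (fun y : ℝ => f₁ ((z.re:ℂ) + (y:ℂ) * Complex.I))
      =ᶠ[nhds z.im] fun y : ℝ => f₂ ((z.re:ℂ) + (y:ℂ) * Complex.I) := ht2.eventually h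
  have e1 : iteratedDeriv 2 (fun x : ℝ => f₁ ((x:ℂ) + (z.im:ℂ) * Complex.I)) z.re
      = iteratedDeriv 2 (fun x : ℝ => f₂ ((x:ℂ) + (z.im:ℂ) * Complex.I)) z.re := by
    rw [iteratedDeriv_succ, iteratedDeriv_one, iteratedDeriv_succ, iteratedDeriv_one]
    exact (h1.deriv).deriv_eq
  have e2 : iteratedDeriv 2 (fun y : ℝ => f₁ ((z.re:ℂ) + (y:ℂ) * Complex.I)) z.im
      = iteratedDeriv 2 (fun y : ℝ => f₂ ((z.re:ℂ) + (y:ℂ) * Complex.I)) z.im := by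
    rw [iteratedDeriv_succ, iteratedDeriv_one, iteratedDeriv_succ, iteratedDeriv_one]
    exact (h2.deriv).deriv_eq
  rw [hypLaplacian, hypLaplacian, e1, e2]

lemma part1 {f : ℂ → ℂ} (hf : ContDiff ℝ (⊤ : ℕ∞) f) (hrad : IsRadial f) :
    IsRadial (hypLaplacian f) := by
  intro z w hz hw hd
  obtain ⟨θ, hθ⟩ := exists_rot hz hw hd
  have hev : (f ∘ mob θ) =ᶠ[nhds z] f := by
    filter_upwards [isOpen_H.mem_nhds hz] with ζ hζ
    exact hrad (mob θ ζ) ζ (im_mob_pos hζ) hζ (dH_mob hζ)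
  calc hypLaplacian f z = hypLaplacian (f ∘ mob θ) z := (hypLaplacian_congr hev).symm
    _ = hypLaplacian f (mob θ z) := comp_lap hf θ hz
    _ = hypLaplacian f w := by rw [hθ]


lemma part2 {f : ℂ → ℂ} (hf : ContDiff ℝ (⊤ : ℕ∞) f) (hfc : HasCompactSupport f) (t : ℝ) :
    abelT (hypLaplacian f) t =
      iteratedDeriv 2 (abelT f) t - (1/4 : ℂ) * abelT f t := by
  -- notation
  set F0 : ℝ → ℂ := fun y => ∫ x : ℝ, f ((x:ℂ) + (y:ℂ) * Complex.I) with hF0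
  set F1 : ℝ → ℂ := fun y => ∫ x : ℝ, dd Complex.I f ((x:ℂ) + (y:ℂ) * Complex.I) with hF1
  set F2 : ℝ → ℂ :=
    fun y => ∫ x : ℝ, dd Complex.I (dd Complex.I f) ((x:ℂ) + (y:ℂ) * Complex.I) with hF2
  have hF0' : ∀ y, HasDerivAt F0 (F1 y) y := fun y => hasDerivAt_intF hf hfc y
  have hF1' : ∀ y, HasDerivAt F1 (F2 y) y := fun y =>
    hasDerivAt_intF (contDiff_dd _ hf) (hcs_dd _ hfc) y
  have habel : ∀ u : ℝ, abelT f u = ((Real.exp (-u/2) : ℝ) : ℂ) * F0 (Real.exp u) := fun u => rfl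
  -- first derivative
  set D1 : ℝ → ℂ :=
    fun u => -(1/2 : ℂ) * abelT f u + ((Real.exp (u/2) : ℝ) : ℂ) * F1 (Real.exp u) with hD1
  set D2 : ℝ → ℂ :=
    fun u => (1/4 : ℂ) * abelT f u + ((Real.exp (3*u/2) : ℝ) : ℂ) * F2 (Real.exp u) with hD2
  have hexp : ∀ (a : ℝ) (u : ℝ), HasDerivAt (fun u : ℝ => ((Real.exp (a*u) : ℝ) : ℂ))
      ((a * Real.exp (a*u) : ℝ) : ℂ) u := by
    intro a u
    have h1 : HasDerivAt (fun u : ℝ => Real.exp (a*u)) (a * Real.exp (a*u)) u := by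
      have h2 : HasDerivAt (fun u : ℝ => a*u) a u := by
        simpa using (hasDerivAt_id u).const_mul a
      simpa [mul_comm, Function.comp_def] using (Real.hasDerivAt_exp (a*u)).comp u h2
    exact h1.ofReal_comp
  have hcomp0 : ∀ u : ℝ, HasDerivAt (fun u : ℝ => F0 (Real.exp u))
      ((Real.exp u : ℝ) • F1 (Real.exp u)) u := fun u =>
    (hF0' (Real.exp u)).scomp u (Real.hasDerivAt_exp u)
  have hcomp1 : ∀ u : ℝ, HasDerivAt (fun u : ℝ => F1 (Real.exp u))
      ((Real.exp u : ℝ) • F2 (Real.exp u)) u := fun u =>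
    (hF1' (Real.exp u)).scomp u (Real.hasDerivAt_exp u)
  have hder1 : ∀ u : ℝ, HasDerivAt (abelT f) (D1 u) u := by
    intro u
    have h1 : HasDerivAt (fun u : ℝ => ((Real.exp (-(1/2)*u) : ℝ) : ℂ) * F0 (Real.exp u))
        (((-(1/2) * Real.exp (-(1/2)*u) : ℝ) : ℂ) * F0 (Real.exp u)
          + ((Real.exp (-(1/2)*u) : ℝ) : ℂ) * ((Real.exp u : ℝ) • F1 (Real.exp u))) u :=
      (hexp (-(1/2)) u).mul (hcomp0 u)
    have e : ∀ v : ℝ, -(1/2)*v = -v/2 := fun v => by ring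
    simp only [e] at h1
    have heq : (fun u : ℝ => ((Real.exp (-u/2) : ℝ) : ℂ) * F0 (Real.exp u)) = abelT f := by
      funext v
      rw [habel v]
    rw [heq] at h1
    convert h1 using 1
    simp only [hD1]
    rw [habel u]
    have hx : ((Real.exp (-u/2) :ℝ):ℂ) * ((Real.exp u :ℝ):ℂ) = ((Real.exp (u/2):ℝ):ℂ) := by
      rw [← Complex.ofReal_mul, ← Real.exp_add, show -u/2 + u = u/2 by ring]
    simp only [Complex.real_smul, Complex.ofReal_mul, Complex.ofReal_neg, Complex.ofReal_div,
      Complex.ofReal_one, Complex.ofReal_ofNat]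
    linear_combination (-(F1 (Real.exp u))) * hx
  have hder2 : ∀ u : ℝ, HasDerivAt D1 (D2 u) u := by
    intro u
    have h2 : HasDerivAt (fun u : ℝ => ((Real.exp ((1/2)*u) : ℝ) : ℂ) * F1 (Real.exp u))
        ((((1/2) * Real.exp ((1/2)*u) : ℝ) : ℂ) * F1 (Real.exp u)
          + ((Real.exp ((1/2)*u) : ℝ) : ℂ) * ((Real.exp u : ℝ) • F2 (Real.exp u))) u :=
      (hexp (1/2) u).mul (hcomp1 u)
    have e : ∀ v : ℝ, (1/2)*v = v/2 := fun v => by ring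
    simp only [e] at h2
    have h3 : HasDerivAt (fun u => -(1/2 : ℂ) * abelT f u) (-(1/2:ℂ) * D1 u) u :=
      (hder1 u).const_mul _
    have h4 := h3.add h2
    change HasDerivAt D1 _ u at h4
    convert h4 using 1
    simp only [hD2, hD1]
    rw [habel u]
    have hx : ((Real.exp (u/2) :ℝ):ℂ) * ((Real.exp u :ℝ):ℂ) = ((Real.exp (3*u/2):ℝ):ℂ) := by
      rw [← Complex.ofReal_mul, ← Real.exp_add, show u/2 + u = 3*u/2 by ring]
    simp only [Complex.real_smul, Complex.ofReal_mul, Complex.ofReal_neg, Complex.ofReal_div,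
      Complex.ofReal_one, Complex.ofReal_ofNat]
    linear_combination (-(F2 (Real.exp u))) * hx
  -- iterated derivative
  have hit : iteratedDeriv 2 (abelT f) t = D2 t := by
    rw [iteratedDeriv_succ, iteratedDeriv_one]
    have hD : deriv (abelT f) = D1 := funext fun u => (hder1 u).deriv
    rw [hD]
    exact (hder2 t).deriv
  rw [hit]
  -- left-hand side
  have him : ∀ (x : ℝ) (y : ℝ), ((x:ℂ) + (y:ℂ) * Complex.I).im = y := by
    intro x y; simp
  have hlhs : abelT (hypLaplacian f) t
      = ((Real.exp (-t/2) : ℝ) : ℂ) * (((Real.exp t : ℝ)^2 : ℝ) : ℂ) * F2 (Real.exp t) := by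
    rw [abelT]
    have : ∀ x : ℝ, hypLaplacian f ((x:ℂ) + ((Real.exp t : ℝ):ℂ) * Complex.I)
        = (((Real.exp t : ℝ)^2 : ℝ) : ℂ) *
          (dd 1 (dd 1 f) ((x:ℂ) + ((Real.exp t:ℝ):ℂ) * Complex.I)
            + dd Complex.I (dd Complex.I f) ((x:ℂ) + ((Real.exp t:ℝ):ℂ) * Complex.I)) := by
      intro x
      rw [hypLaplacian_eq hf]
      rw [him]
    rw [MeasureTheory.integral_congr_ae (Filter.Eventually.of_forall this)]
    rw [MeasureTheory.integral_const_mul]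
    rw [MeasureTheory.integral_add
      (integrable_line (contDiff_dd 1 (contDiff_dd 1 hf)).continuous
        (hcs_dd 1 (hcs_dd 1 hfc)) _)
      (integrable_line (contDiff_dd Complex.I (contDiff_dd Complex.I hf)).continuous
        (hcs_dd Complex.I (hcs_dd Complex.I hfc)) _)]
    rw [integral_ddx_zero hf hfc]
    rw [hF2]
    ring
  rw [hlhs]
  simp only [hD2]
  rw [habel t]
  have hx : ((Real.exp (-t/2) :ℝ):ℂ) * ((Real.exp t ^ 2 :ℝ):ℂ) = ((Real.exp (3*t/2):ℝ):ℂ) := by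
    rw [← Complex.ofReal_mul]
    congr 1
    rw [pow_two, ← Real.exp_add, ← Real.exp_add]
    ring_nf
  linear_combination F2 (Real.exp t) * hx

end Stmt9

/-- transmutation property of the Abel transform on the hyperbolic plane:
for radial `f ∈ C_c^∞(H²)`, `Δf` is radial and `A(Δf) = (Af)″ − (1/4)(Af)`. -/
theorem stmt_9 (f : ℂ → ℂ) (hf : ContDiff ℝ (⊤ : ℕ∞) f) (hfc : HasCompactSupport f)
    (hsupp : tsupport f ⊆ {z : ℂ | 0 < z.im}) (hrad : IsRadial f) :
    IsRadial (hypLaplacian f) ∧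
    ∀ t : ℝ, abelT (hypLaplacian f) t =
      iteratedDeriv 2 (abelT f) t - (1/4 : ℂ) * abelT f t :=
  ⟨Stmt9.part1 hf hrad, fun t => Stmt9.part2 hf hfc t⟩
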